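/- On the flat torus T², for a Hamiltonian vector field X_h with components X_h¹ = ∂_{x₂}h and X_h² = −∂_{x₁}h of a smooth periodic function h, the L² matrix elements of 𝔏_{X_h} between positive-chirality eigenspinors satisfy ⟨ψ⁺_{l₁,l₂}, 𝔏_{X_h} ψ⁺_{n₁,n₂}⟩ = i · conj(r(l₁,l₂,n₁,n₂)) · ĥ(l₁−n₁, l₂−n₂), where r(l₁,l₂,n₁,n₂) = (π²/2)[(l₁−n₁)²+(l₂−n₂)²+4i(l₁n₂−l₂n₁)] and ĥ(k₁,k₂) = ∫_{T²} h·e^{−2πi(k₁x₁+k₂x₂)} dx is the Fourier coefficient. -/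

import Mathlib

open Complex MeasureTheory

noncomputable section

/-- Partial derivative in the `x₁` direction. -/
def pd1 (f : ℝ × ℝ → ℝ) (x : ℝ × ℝ) : ℝ := fderiv ℝ f x (1, 0)

/-- Partial derivative in the `x₂` direction. -/
def pd2 (f : ℝ × ℝ → ℝ) (x : ℝ × ℝ) : ℝ := fderiv ℝ f x (0, 1)

/-- The flat Laplacian `Δh = ∂₁∂₁h + ∂₂∂₂h`. -/
def lap (f : ℝ × ℝ → ℝ) (x : ℝ × ℝ) : ℝ := pd1 (pd1 f) x + pd2 (pd2 f) x

/-- The positive-chirality component of the torus eigenspinor: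
`ψ⁺_{l₁,l₂}(x) = (1/√2)·e^{2πi(l₁x₁+l₂x₂)}`. -/
def psiPlus (l1 l2 : ℤ) (x : ℝ × ℝ) : ℂ :=
  (1 / (Real.sqrt 2 : ℂ)) * Complex.exp (2 * Real.pi * I * ((l1 : ℂ) * (x.1 : ℂ) + (l2 : ℂ) * (x.2 : ℂ)))

/-- The Kosmann–Lichnerowicz derivative along the Hamiltonian vector field
`X_h = (∂₂h, −∂₁h)` applied to `ψ⁺_{n₁,n₂}`:
`𝔏_{X_h}ψ⁺_{n₁,n₂} = [2πi(∂₂h·n₁ − ∂₁h·n₂) − (i/4)Δh]·ψ⁺_{n₁,n₂}`. -/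
def KLHamPlus (h : ℝ × ℝ → ℝ) (n1 n2 : ℤ) (x : ℝ × ℝ) : ℂ :=
  (2 * Real.pi * I * ((pd2 h x : ℂ) * (n1 : ℂ) - (pd1 h x : ℂ) * (n2 : ℂ)) -
      I / 4 * (lap h x : ℂ)) * psiPlus n1 n2 x

/-- The unit square, fundamental domain of `T² = ℝ²/ℤ²`. -/
def unitSquare : Set (ℝ × ℝ) := (Set.Ioc (0 : ℝ) 1) ×ˢ (Set.Ioc (0 : ℝ) 1)

/-- `r(l₁,l₂,n₁,n₂) = (π²/2)[(l₁−n₁)² + (l₂−n₂)² + 4i(l₁n₂ − l₂n₁)]`. -/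
def rCoeff (l1 l2 n1 n2 : ℤ) : ℂ :=
  ((Real.pi ^ 2 / 2 : ℝ) : ℂ) *
    (((l1 - n1 : ℤ) : ℂ) ^ 2 + ((l2 - n2 : ℤ) : ℂ) ^ 2 + 4 * I * ((l1 * n2 - l2 * n1 : ℤ) : ℂ))

/-- The Fourier coefficient `ĥ(k₁,k₂) = ∫_{T²} h·e^{−2πi(k₁x₁+k₂x₂)} dx`. -/
def fourierCoef2 (h : ℝ × ℝ → ℝ) (k1 k2 : ℤ) : ℂ :=
  ∫ x in unitSquare, (h x : ℂ) * Complex.exp (-(2 * Real.pi * I * ((k1 : ℂ) * (x.1 : ℂ) + (k2 : ℂ) * (x.2 : ℂ))))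

lemma integrableOn_unitSquare (f : ℝ × ℝ → ℂ) (hf : Continuous f) :
    IntegrableOn f unitSquare := by
  have h2 : IntegrableOn f ((Set.Icc (0:ℝ) 1) ×ˢ (Set.Icc (0:ℝ) 1)) volume :=
    hf.continuousOn.integrableOn_compact (isCompact_Icc.prod isCompact_Icc)
  exact h2.mono_set (Set.prod_mono Set.Ioc_subset_Icc_self Set.Ioc_subset_Icc_self)

lemma ftc_per (f f' : ℝ → ℂ) (hd : ∀ t, HasDerivAt f (f' t) t) (hc : Continuous f')
    (hp : f 1 = f 0) : ∫ t in Set.Ioc (0:ℝ) 1, f' t = 0 := by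
  have h := intervalIntegral.integral_eq_sub_of_hasDerivAt (f := f) (f' := f')
      (fun t _ => hd t) (hc.intervalIntegrable 0 1)
  rw [intervalIntegral.integral_of_le zero_le_one] at h
  rw [h, hp, sub_self]

lemma pd1_contDiff (g : ℝ × ℝ → ℝ) (hg : ContDiff ℝ (⊤ : ℕ∞) g) : ContDiff ℝ (⊤ : ℕ∞) (pd1 g) :=
  (hg.fderiv_right (by simp)).clm_apply contDiff_const

lemma pd2_contDiff (g : ℝ × ℝ → ℝ) (hg : ContDiff ℝ (⊤ : ℕ∞) g) : ContDiff ℝ (⊤ : ℕ∞) (pd2 g) :=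
  (hg.fderiv_right (by simp)).clm_apply contDiff_const

lemma fderiv_translate (g : ℝ × ℝ → ℝ) (hg : Differentiable ℝ g) (c : ℝ × ℝ)
    (hper : ∀ x, g (x + c) = g x) (x : ℝ × ℝ) : fderiv ℝ g (x + c) = fderiv ℝ g x := by
  have h1 : HasFDerivAt (fun y : ℝ × ℝ => y + c) (ContinuousLinearMap.id ℝ (ℝ × ℝ)) x :=
    (hasFDerivAt_id x).add_const c
  have h2 := ((hg (x + c)).hasFDerivAt).comp x h1
  have h3 : (g ∘ fun y => y + c) = g := funext fun y => hper y
  rw [h3] at h2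
  rw [ContinuousLinearMap.comp_id] at h2
  exact h2.fderiv.symm

lemma int_d1_zero (F D : ℝ × ℝ → ℂ) (hD : Continuous D)
    (hderiv : ∀ y t : ℝ, HasDerivAt (fun s => F (s, y)) (D (t, y)) t)
    (hper : ∀ x : ℝ × ℝ, F (x.1 + 1, x.2) = F x) :
    ∫ x in unitSquare, D x = 0 := by
  have hint : IntegrableOn D unitSquare := integrableOn_unitSquare D hD
  rw [unitSquare] at hint ⊢
  rw [MeasureTheory.Measure.volume_eq_prod] at hint ⊢
  simp only [← Measure.prod_restrict, IntegrableOn] at hint ⊢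
  rw [MeasureTheory.integral_prod_symm D hint]
  have hinner : ∀ y : ℝ, (∫ x, D (x, y) ∂(volume.restrict (Set.Ioc (0:ℝ) 1))) = 0 := by
    intro y
    apply ftc_per (fun s => F (s, y)) (fun t => D (t, y)) (fun t => hderiv y t)
      (hD.comp (continuous_id.prodMk continuous_const))
    simpa using hper (0, y)
  simp only [hinner, integral_zero]

lemma int_d2_zero (F D : ℝ × ℝ → ℂ) (hD : Continuous D)
    (hderiv : ∀ x t : ℝ, HasDerivAt (fun s => F (x, s)) (D (x, t)) t)
    (hper : ∀ x : ℝ × ℝ, F (x.1, x.2 + 1) = F x) :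
    ∫ x in unitSquare, D x = 0 := by
  have hint : IntegrableOn D unitSquare := integrableOn_unitSquare D hD
  rw [unitSquare] at hint ⊢
  rw [MeasureTheory.Measure.volume_eq_prod] at hint ⊢
  simp only [← Measure.prod_restrict, IntegrableOn] at hint ⊢
  rw [MeasureTheory.integral_prod D hint]
  have hinner : ∀ x : ℝ, (∫ y, D (x, y) ∂(volume.restrict (Set.Ioc (0:ℝ) 1))) = 0 := by
    intro x
    apply ftc_per (fun s => F (x, s)) (fun t => D (x, t)) (fun t => hderiv x t)
      (hD.comp (continuous_const.prodMk continuous_id))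
    simpa using hper (x, 0)
  simp only [hinner, integral_zero]

def eK (k1 k2 : ℤ) (x : ℝ × ℝ) : ℂ :=
  Complex.exp (-(2 * Real.pi * I * ((k1 : ℂ) * (x.1 : ℂ) + (k2 : ℂ) * (x.2 : ℂ))))

lemma eK_continuous (k1 k2 : ℤ) : Continuous (eK k1 k2) := by
  apply Complex.continuous_exp.comp
  fun_prop

lemma eK_per1 (k1 k2 : ℤ) (x : ℝ × ℝ) : eK k1 k2 (x.1 + 1, x.2) = eK k1 k2 x := by
  unfold eK
  rw [show -(2 * (Real.pi:ℂ) * I * ((k1 : ℂ) * ((x.1 + 1 : ℝ) : ℂ) + (k2 : ℂ) * (x.2 : ℂ)))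
      = -(2 * (Real.pi:ℂ) * I * ((k1 : ℂ) * (x.1 : ℂ) + (k2 : ℂ) * (x.2 : ℂ)))
        + ((-k1 : ℤ) : ℂ) * (2 * Real.pi * I) from by push_cast; ring]
  rw [Complex.exp_add, Complex.exp_int_mul_two_pi_mul_I, mul_one]

lemma eK_per2 (k1 k2 : ℤ) (x : ℝ × ℝ) : eK k1 k2 (x.1, x.2 + 1) = eK k1 k2 x := by
  unfold eK
  rw [show -(2 * (Real.pi:ℂ) * I * ((k1 : ℂ) * ((x.1 : ℝ) : ℂ) + (k2 : ℂ) * ((x.2 + 1 : ℝ) : ℂ)))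
      = -(2 * (Real.pi:ℂ) * I * ((k1 : ℂ) * (x.1 : ℂ) + (k2 : ℂ) * (x.2 : ℂ)))
        + ((-k2 : ℤ) : ℂ) * (2 * Real.pi * I) from by push_cast; ring]
  rw [Complex.exp_add, Complex.exp_int_mul_two_pi_mul_I, mul_one]

lemma eK_hasDerivAt1 (k1 k2 : ℤ) (y t : ℝ) :
    HasDerivAt (fun s : ℝ => eK k1 k2 (s, y)) (-(2 * Real.pi * I * k1) * eK k1 k2 (t, y)) t := by
  have h0 : HasDerivAt (fun s : ℝ => (s : ℂ)) 1 t := (hasDerivAt_id t).ofReal_comp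
  have h1 := (((h0.const_mul ((k1 : ℂ))).add_const ((k2 : ℂ) * (y : ℂ))).const_mul
      (2 * (Real.pi : ℂ) * I)).neg.cexp
  convert h1 using 1
  · funext s; unfold eK; simp only [Pi.neg_apply]
  · unfold eK; simp only [Pi.neg_apply]; ring_nf

lemma eK_hasDerivAt2 (k1 k2 : ℤ) (x t : ℝ) :
    HasDerivAt (fun s : ℝ => eK k1 k2 (x, s)) (-(2 * Real.pi * I * k2) * eK k1 k2 (x, t)) t := by
  have h0 : HasDerivAt (fun s : ℝ => (s : ℂ)) 1 t := (hasDerivAt_id t).ofReal_comp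
  have h1 := ((((h0.const_mul ((k2 : ℂ))).const_add ((k1 : ℂ) * (x : ℂ)))).const_mul
      (2 * (Real.pi : ℂ) * I)).neg.cexp
  convert h1 using 1
  · funext s; unfold eK; simp only [Pi.neg_apply]
  · unfold eK; simp only [Pi.neg_apply]; ring_nf

lemma pd1_hasDerivAt (g : ℝ × ℝ → ℝ) (hg : ContDiff ℝ (⊤ : ℕ∞) g) (y t : ℝ) :
    HasDerivAt (fun s : ℝ => g (s, y)) (pd1 g (t, y)) t := by
  have hd : HasDerivAt (fun s : ℝ => ((s : ℝ), y)) ((1 : ℝ), (0 : ℝ)) t :=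
    (hasDerivAt_id t).prodMk (hasDerivAt_const t y)
  have := (hg.differentiable (by simp) (t, y)).hasFDerivAt.comp_hasDerivAt t hd
  exact this

lemma pd2_hasDerivAt (g : ℝ × ℝ → ℝ) (hg : ContDiff ℝ (⊤ : ℕ∞) g) (x t : ℝ) :
    HasDerivAt (fun s : ℝ => g (x, s)) (pd2 g (x, t)) t := by
  have hd : HasDerivAt (fun s : ℝ => ((x : ℝ), (s:ℝ))) ((0 : ℝ), (1 : ℝ)) t :=
    (hasDerivAt_const t x).prodMk (hasDerivAt_id t)
  have := (hg.differentiable (by simp) (x, t)).hasFDerivAt.comp_hasDerivAt t hd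
  exact this

lemma add10 (y : ℝ × ℝ) : y + ((1:ℝ), (0:ℝ)) = (y.1 + 1, y.2) := by ext <;> simp

lemma add01 (y : ℝ × ℝ) : y + ((0:ℝ), (1:ℝ)) = (y.1, y.2 + 1) := by ext <;> simp

lemma pd1_per (g : ℝ × ℝ → ℝ) (hg : ContDiff ℝ (⊤ : ℕ∞) g)
    (hper : ∀ x : ℝ × ℝ, g (x.1 + 1, x.2) = g x) :
    ∀ x : ℝ × ℝ, pd1 g (x.1 + 1, x.2) = pd1 g x := by
  intro x
  have hper' : ∀ y : ℝ × ℝ, g (y + (1, 0)) = g y := fun y => by rw [add10 y]; exact hper y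
  have := fderiv_translate g (hg.differentiable (by simp)) (1, 0) hper' x
  rw [add10 x] at this
  simpa [pd1, Prod.ext_iff] using congrArg (fun L => L ((1:ℝ), (0:ℝ))) this

lemma pd1_per2 (g : ℝ × ℝ → ℝ) (hg : ContDiff ℝ (⊤ : ℕ∞) g)
    (hper : ∀ x : ℝ × ℝ, g (x.1, x.2 + 1) = g x) :
    ∀ x : ℝ × ℝ, pd1 g (x.1, x.2 + 1) = pd1 g x := by
  intro x
  have hper' : ∀ y : ℝ × ℝ, g (y + (0, 1)) = g y := fun y => by rw [add01 y]; exact hper y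
  have := fderiv_translate g (hg.differentiable (by simp)) (0, 1) hper' x
  rw [add01 x] at this
  simpa [pd1, Prod.ext_iff] using congrArg (fun L => L ((1:ℝ), (0:ℝ))) this

lemma pd2_per (g : ℝ × ℝ → ℝ) (hg : ContDiff ℝ (⊤ : ℕ∞) g)
    (hper : ∀ x : ℝ × ℝ, g (x.1 + 1, x.2) = g x) :
    ∀ x : ℝ × ℝ, pd2 g (x.1 + 1, x.2) = pd2 g x := by
  intro x
  have hper' : ∀ y : ℝ × ℝ, g (y + (1, 0)) = g y := fun y => by rw [add10 y]; exact hper y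
  have := fderiv_translate g (hg.differentiable (by simp)) (1, 0) hper' x
  rw [add10 x] at this
  simpa [pd2, Prod.ext_iff] using congrArg (fun L => L ((0:ℝ), (1:ℝ))) this

lemma pd2_per2 (g : ℝ × ℝ → ℝ) (hg : ContDiff ℝ (⊤ : ℕ∞) g)
    (hper : ∀ x : ℝ × ℝ, g (x.1, x.2 + 1) = g x) :
    ∀ x : ℝ × ℝ, pd2 g (x.1, x.2 + 1) = pd2 g x := by
  intro x
  have hper' : ∀ y : ℝ × ℝ, g (y + (0, 1)) = g y := fun y => by rw [add01 y]; exact hper y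
  have := fderiv_translate g (hg.differentiable (by simp)) (0, 1) hper' x
  rw [add01 x] at this
  simpa [pd2, Prod.ext_iff] using congrArg (fun L => L ((0:ℝ), (1:ℝ))) this

lemma ibp1 (g : ℝ × ℝ → ℝ) (hg : ContDiff ℝ (⊤ : ℕ∞) g)
    (hper : ∀ x : ℝ × ℝ, g (x.1 + 1, x.2) = g x) (k1 k2 : ℤ) :
    ∫ x in unitSquare, (pd1 g x : ℂ) * eK k1 k2 x
      = (2 * Real.pi * I * k1) * ∫ x in unitSquare, (g x : ℂ) * eK k1 k2 x := by
  set c : ℂ := 2 * Real.pi * I * k1 with hc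
  have hgc : Continuous g := hg.continuous
  have hpd1c : Continuous (pd1 g) := (pd1_contDiff g hg).continuous
  have hA : IntegrableOn (fun x => (pd1 g x : ℂ) * eK k1 k2 x) unitSquare :=
    integrableOn_unitSquare _ ((Complex.continuous_ofReal.comp hpd1c).mul (eK_continuous k1 k2))
  have hB : IntegrableOn (fun x => (g x : ℂ) * eK k1 k2 x) unitSquare :=
    integrableOn_unitSquare _ ((Complex.continuous_ofReal.comp hgc).mul (eK_continuous k1 k2))
  have hzero : ∫ x in unitSquare,
      ((pd1 g x : ℂ) * eK k1 k2 x + (-c) * ((g x : ℂ) * eK k1 k2 x)) = 0 := by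
    apply int_d1_zero (fun x => (g x : ℂ) * eK k1 k2 x)
    · exact ((Complex.continuous_ofReal.comp hpd1c).mul (eK_continuous k1 k2)).add
        (continuous_const.mul ((Complex.continuous_ofReal.comp hgc).mul (eK_continuous k1 k2)))
    · intro y t
      have h1 := (pd1_hasDerivAt g hg y t).ofReal_comp.mul (eK_hasDerivAt1 k1 k2 y t)
      exact h1.congr_deriv (by rw [hc]; ring)
    · intro x
      simp only [hper x, eK_per1 k1 k2 x]
  rw [MeasureTheory.integral_add hA (hB.const_mul (-c))] at hzero
  rw [MeasureTheory.integral_const_mul] at hzero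
  linear_combination hzero

lemma ibp2 (g : ℝ × ℝ → ℝ) (hg : ContDiff ℝ (⊤ : ℕ∞) g)
    (hper : ∀ x : ℝ × ℝ, g (x.1, x.2 + 1) = g x) (k1 k2 : ℤ) :
    ∫ x in unitSquare, (pd2 g x : ℂ) * eK k1 k2 x
      = (2 * Real.pi * I * k2) * ∫ x in unitSquare, (g x : ℂ) * eK k1 k2 x := by
  set c : ℂ := 2 * Real.pi * I * k2 with hc
  have hgc : Continuous g := hg.continuous
  have hpd2c : Continuous (pd2 g) := (pd2_contDiff g hg).continuous
  have hA : IntegrableOn (fun x => (pd2 g x : ℂ) * eK k1 k2 x) unitSquare :=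
    integrableOn_unitSquare _ ((Complex.continuous_ofReal.comp hpd2c).mul (eK_continuous k1 k2))
  have hB : IntegrableOn (fun x => (g x : ℂ) * eK k1 k2 x) unitSquare :=
    integrableOn_unitSquare _ ((Complex.continuous_ofReal.comp hgc).mul (eK_continuous k1 k2))
  have hzero : ∫ x in unitSquare,
      ((pd2 g x : ℂ) * eK k1 k2 x + (-c) * ((g x : ℂ) * eK k1 k2 x)) = 0 := by
    apply int_d2_zero (fun x => (g x : ℂ) * eK k1 k2 x)
    · exact ((Complex.continuous_ofReal.comp hpd2c).mul (eK_continuous k1 k2)).add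
        (continuous_const.mul ((Complex.continuous_ofReal.comp hgc).mul (eK_continuous k1 k2)))
    · intro x t
      have h1 := (pd2_hasDerivAt g hg x t).ofReal_comp.mul (eK_hasDerivAt2 k1 k2 x t)
      exact h1.congr_deriv (by rw [hc]; ring)
    · intro x
      simp only [hper x, eK_per2 k1 k2 x]
  rw [MeasureTheory.integral_add hA (hB.const_mul (-c))] at hzero
  rw [MeasureTheory.integral_const_mul] at hzero
  linear_combination hzero

/-- On the flat torus, for a smooth periodic Hamiltonian function `h`:
`⟨ψ⁺_{l₁,l₂}, 𝔏_{X_h}ψ⁺_{n₁,n₂}⟩_{L²} = i·conj(r(l₁,l₂,n₁,n₂))·ĥ(l₁−n₁, l₂−n₂)`. -/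
theorem torus_chiral_matrix_elements (h : ℝ × ℝ → ℝ) (hsmooth : ContDiff ℝ (⊤ : ℕ∞) h)
    (hper1 : ∀ x : ℝ × ℝ, h (x.1 + 1, x.2) = h x)
    (hper2 : ∀ x : ℝ × ℝ, h (x.1, x.2 + 1) = h x)
    (l1 l2 n1 n2 : ℤ) :
    (∫ x in unitSquare, starRingEnd ℂ (psiPlus l1 l2 x) * KLHamPlus h n1 n2 x) =
      I * starRingEnd ℂ (rCoeff l1 l2 n1 n2) * fourierCoef2 h (l1 - n1) (l2 - n2) := by
  have hsq : (Real.sqrt 2 : ℂ) * (Real.sqrt 2 : ℂ) = 2 := by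
    norm_cast
    rw [Real.mul_self_sqrt (by norm_num : (0:ℝ) ≤ 2)]
  have h12 : (1 / (Real.sqrt 2 : ℂ)) * (1 / (Real.sqrt 2 : ℂ)) = 1 / 2 := by
    rw [div_mul_div_comm, one_mul, hsq]
  -- pointwise identity for the integrand
  have hpt : ∀ x : ℝ × ℝ, starRingEnd ℂ (psiPlus l1 l2 x) * KLHamPlus h n1 n2 x =
      ((Real.pi : ℂ) * I * (n1 : ℂ)) * ((pd2 h x : ℂ) * eK (l1 - n1) (l2 - n2) x)
      + (-((Real.pi : ℂ) * I * (n2 : ℂ))) * ((pd1 h x : ℂ) * eK (l1 - n1) (l2 - n2) x)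
      + (-(I / 8)) * ((pd1 (pd1 h) x : ℂ) * eK (l1 - n1) (l2 - n2) x)
      + (-(I / 8)) * ((pd2 (pd2 h) x : ℂ) * eK (l1 - n1) (l2 - n2) x) := by
    intro x
    have hexp : Complex.exp ((starRingEnd ℂ)
          (2 * Real.pi * I * ((l1 : ℂ) * (x.1 : ℂ) + (l2 : ℂ) * (x.2 : ℂ)))) *
        Complex.exp (2 * Real.pi * I * ((n1 : ℂ) * (x.1 : ℂ) + (n2 : ℂ) * (x.2 : ℂ)))
        = eK (l1 - n1) (l2 - n2) x := by
      rw [← Complex.exp_add]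
      unfold eK
      congr 1
      simp only [map_mul, map_add, Complex.conj_I, Complex.conj_ofReal, map_intCast, map_ofNat]
      push_cast
      ring
    calc starRingEnd ℂ (psiPlus l1 l2 x) * KLHamPlus h n1 n2 x
        = ((1 / (Real.sqrt 2 : ℂ)) * (1 / (Real.sqrt 2 : ℂ))) *
            (Complex.exp ((starRingEnd ℂ)
              (2 * Real.pi * I * ((l1 : ℂ) * (x.1 : ℂ) + (l2 : ℂ) * (x.2 : ℂ)))) *
             Complex.exp (2 * Real.pi * I * ((n1 : ℂ) * (x.1 : ℂ) + (n2 : ℂ) * (x.2 : ℂ)))) *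
            (2 * Real.pi * I * ((pd2 h x : ℂ) * (n1 : ℂ) - (pd1 h x : ℂ) * (n2 : ℂ)) -
              I / 4 * (lap h x : ℂ)) := by
          unfold KLHamPlus psiPlus
          rw [map_mul, ← Complex.exp_conj, map_div₀, map_one, Complex.conj_ofReal]
          ring
      _ = _ := by
          rw [hexp, h12]
          unfold lap
          push_cast
          ring
  simp_rw [hpt]
  -- integrability of the pieces
  have hec := eK_continuous (l1 - n1) (l2 - n2)
  have hInt : ∀ g : ℝ × ℝ → ℝ, Continuous g →
      IntegrableOn (fun x => (g x : ℂ) * eK (l1 - n1) (l2 - n2) x) unitSquare := by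
    intro g hgc
    exact integrableOn_unitSquare _ ((Complex.continuous_ofReal.comp hgc).mul hec)
  have h1c : Continuous (pd1 h) := (pd1_contDiff h hsmooth).continuous
  have h2c : Continuous (pd2 h) := (pd2_contDiff h hsmooth).continuous
  have h11c : Continuous (pd1 (pd1 h)) := (pd1_contDiff _ (pd1_contDiff h hsmooth)).continuous
  have h22c : Continuous (pd2 (pd2 h)) := (pd2_contDiff _ (pd2_contDiff h hsmooth)).continuous
  have hIA : IntegrableOn (fun x : ℝ × ℝ =>
      ((Real.pi : ℂ) * I * (n1 : ℂ)) * ((pd2 h x : ℂ) * eK (l1 - n1) (l2 - n2) x)) unitSquare :=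
    (hInt _ h2c).const_mul _
  have hIB : IntegrableOn (fun x : ℝ × ℝ =>
      (-((Real.pi : ℂ) * I * (n2 : ℂ))) * ((pd1 h x : ℂ) * eK (l1 - n1) (l2 - n2) x)) unitSquare :=
    (hInt _ h1c).const_mul _
  have hIC : IntegrableOn (fun x : ℝ × ℝ =>
      (-(I / 8)) * ((pd1 (pd1 h) x : ℂ) * eK (l1 - n1) (l2 - n2) x)) unitSquare :=
    (hInt _ h11c).const_mul _
  have hID : IntegrableOn (fun x : ℝ × ℝ =>
      (-(I / 8)) * ((pd2 (pd2 h) x : ℂ) * eK (l1 - n1) (l2 - n2) x)) unitSquare :=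
    (hInt _ h22c).const_mul _
  have hIAB : IntegrableOn (fun x : ℝ × ℝ =>
      ((Real.pi : ℂ) * I * (n1 : ℂ)) * ((pd2 h x : ℂ) * eK (l1 - n1) (l2 - n2) x)
      + (-((Real.pi : ℂ) * I * (n2 : ℂ))) * ((pd1 h x : ℂ) * eK (l1 - n1) (l2 - n2) x))
      unitSquare := hIA.add hIB
  have hIABC : IntegrableOn (fun x : ℝ × ℝ =>
      ((Real.pi : ℂ) * I * (n1 : ℂ)) * ((pd2 h x : ℂ) * eK (l1 - n1) (l2 - n2) x)
      + (-((Real.pi : ℂ) * I * (n2 : ℂ))) * ((pd1 h x : ℂ) * eK (l1 - n1) (l2 - n2) x)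
      + (-(I / 8)) * ((pd1 (pd1 h) x : ℂ) * eK (l1 - n1) (l2 - n2) x)) unitSquare :=
    hIAB.add hIC
  rw [MeasureTheory.integral_add hIABC hID, MeasureTheory.integral_add hIAB hIC,
      MeasureTheory.integral_add hIA hIB]
  simp only [MeasureTheory.integral_const_mul]
  rw [ibp2 h hsmooth hper2 (l1 - n1) (l2 - n2),
      ibp1 h hsmooth hper1 (l1 - n1) (l2 - n2),
      ibp1 (pd1 h) (pd1_contDiff h hsmooth) (pd1_per h hsmooth hper1) (l1 - n1) (l2 - n2),
      ibp1 h hsmooth hper1 (l1 - n1) (l2 - n2),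
      ibp2 (pd2 h) (pd2_contDiff h hsmooth) (pd2_per2 h hsmooth hper2) (l1 - n1) (l2 - n2),
      ibp2 h hsmooth hper2 (l1 - n1) (l2 - n2)]
  have hJ0 : fourierCoef2 h (l1 - n1) (l2 - n2)
      = ∫ x in unitSquare, (h x : ℂ) * eK (l1 - n1) (l2 - n2) x := rfl
  rw [hJ0]
  unfold rCoeff
  simp only [map_mul, map_add, Complex.conj_I, Complex.conj_ofReal, map_intCast, map_ofNat,
    map_pow, map_sub, map_div₀]
  push_cast
  set J : ℂ := ∫ x in unitSquare, (h x : ℂ) * eK (l1 - n1) (l2 - n2) x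
  linear_combination (-(((Real.pi : ℂ))^2 / 2) * I *
      (((l1 : ℂ) - n1)^2 + ((l2 : ℂ) - n2)^2) * J) * Complex.I_sq

end
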